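/- arXiv:0811.2477 — 2 statements merged into one kernel-verified Lean document; each statement's English description precedes it below -/
import Mathlib

section
/- For every natural number k ≥ 1, the triangular number t_n with n = 2^(2^k) + 1 equals 2^(2^(k+1) - 1) + 2^(2^k) + 2^(2^k - 1) + 1, and hence is palindromic in base 2. -/
/-!
With `n = 2 ^ (m + 1) + 1` one has `t_n = (2 ^ m + 1) * (2 ^ (m + 1) + 1)`, and since `2 ^ m + 1`
has `m + 1` binary digits, multiplying it by `2 ^ (m + 1) + 1` just writes its digit string twice.
For `m ≥ 1` that string `1 0 … 0 1` is a palindrome, hence so is the doubled string.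
-/

/-- The n-th triangular number. -/
def tri (n : ℕ) : ℕ := n * (n + 1) / 2

theorem tri_two_pow_succ_add_one (m : ℕ) :
    tri (2 ^ (m + 1) + 1) = (2 ^ m + 1) * (2 ^ (m + 1) + 1) := by
  have h : (2 ^ (m + 1) + 1) * (2 ^ (m + 1) + 1 + 1) = 2 * ((2 ^ m + 1) * (2 ^ (m + 1) + 1)) := by
    ring
  rw [tri, h, Nat.mul_div_cancel_left _ two_pos]

namespace Nat

theorem digits_mul_base_pow_length_digits_add_one {b : ℕ} (hb : 0 < b) (x : ℕ) :
    digits b (x * (b ^ (digits b x).length + 1)) = digits b x ++ digits b x := by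
  rw [digits_append_digits hb]
  ring_nf

theorem digits_base_pow_succ_add_one {b : ℕ} (hb : 1 < b) (j : ℕ) :
    digits b (b ^ (j + 1) + 1) = 1 :: List.replicate j 0 ++ [1] := by
  have h1 : digits b 1 = [1] := digits_of_lt b 1 one_ne_zero hb
  have h := digits_append_zeroes_append_digits (k := j) (n := 1) hb one_pos
  rw [h1, List.length_singleton, add_comm 1 j, mul_one, add_comm] at h
  rw [← h]
  rfl

end Nat

theorem triangular_palindromic_base_two (k : ℕ) (hk : 1 ≤ k) :
    tri (2 ^ (2 ^ k) + 1) =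
      2 ^ (2 ^ (k + 1) - 1) + 2 ^ (2 ^ k) + 2 ^ (2 ^ k - 1) + 1 ∧
    (Nat.digits 2 (tri (2 ^ (2 ^ k) + 1))).reverse =
      Nat.digits 2 (tri (2 ^ (2 ^ k) + 1)) := by
  obtain ⟨j, hj⟩ : ∃ j, 2 ^ k = j + 2 :=
    ⟨2 ^ k - 2, by have := Nat.pow_le_pow_right two_pos hk; omega⟩
  have hk1 : 2 ^ (k + 1) - 1 = 2 * (j + 1) + 1 := by rw [pow_succ]; omega
  have htri := tri_two_pow_succ_add_one (j + 1)
  refine ⟨by rw [hj, hk1, htri, show j + 2 - 1 = j + 1 by omega]; ring, ?_⟩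
  have hdigits : Nat.digits 2 (2 ^ (j + 1) + 1) = 1 :: List.replicate j 0 ++ [1] :=
    Nat.digits_base_pow_succ_add_one one_lt_two j
  have hlen : (Nat.digits 2 (2 ^ (j + 1) + 1)).length = j + 2 := by rw [hdigits]; simp
  rw [hj, htri, ← hlen, Nat.digits_mul_base_pow_length_digits_add_one two_pos, hdigits]
  simp
end

section
/- For every natural number k ≥ 1, with n = (3^k - 1)/2, the triangular number t_n equals (9^k - 1)/8 = 1 + 9 + 9^2 + ... + 9^{k-1}, hence is a repunit in base 9 and palindromic in bases 3 and 9. -/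
/-!
Since `8 t_n + 1 = (2n + 1)²`, the choice `2n + 1 = 3^k` gives `8 t_n + 1 = 9^k`, which is also
`8 (1 + 9 + ⋯ + 9^(k-1)) + 1`. Writing each base-9 digit `1` in base 3 as the digit pair `1, 0`
shows that the base-3 digits are `1, 0, 1, …, 0, 1`, a palindrome.
-/

open Finset List

namespace List

variable {α : Type*}

theorem intersperse_append_singleton (sep x : α) {l : List α} (hl : l ≠ []) :
    (l ++ [x]).intersperse sep = l.intersperse sep ++ [sep, x] := by
  induction l with
  | nil => contradiction
  | cons y l ih =>
    cases l with
    | nil => rfl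
    | cons z l =>
      rw [cons_append, cons_append, intersperse_cons_cons, ← cons_append, ih (cons_ne_nil z l)]
      rfl

theorem reverse_intersperse (sep : α) (l : List α) :
    (l.intersperse sep).reverse = l.reverse.intersperse sep := by
  induction l with
  | nil => rfl
  | cons y l ih =>
    cases l with
    | nil => rfl
    | cons z l =>
      rw [intersperse_cons_cons, reverse_cons, reverse_cons, ih, reverse_cons (a := y),
        intersperse_append_singleton sep y (by simp), append_assoc]
      rfl

end List

namespace Nat

variable {b : ℕ}

theorem digits_geom_sum (hb : 2 ≤ b) (k : ℕ) :
    b.digits (∑ i ∈ range k, b ^ i) = replicate k 1 := by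
  induction k with
  | zero => simp
  | succ k ih =>
    rw [geom_sum_succ, add_comm, digits_add b hb 1 _ (by omega) (Or.inl one_ne_zero), ih,
      replicate_succ]

theorem digits_geom_sum_sq (hb : 2 ≤ b) :
    ∀ k, b.digits (∑ i ∈ range k, (b ^ 2) ^ i) = (replicate k 1).intersperse 0
  | 0 => by simp
  | 1 => by simp [digits_of_lt b 1 one_ne_zero hb]
  | k + 2 => by
    have hpos : ∑ i ∈ range (k + 1), (b ^ 2) ^ i ≠ 0 :=
      (geom_sum_pos (Nat.zero_le _) k.succ_ne_zero).ne'
    have hsplit : ∑ i ∈ range (k + 2), (b ^ 2) ^ i =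
        1 + b * (0 + b * ∑ i ∈ range (k + 1), (b ^ 2) ^ i) := by
      rw [geom_sum_succ]; ring
    rw [hsplit, digits_add b hb 1 _ (by omega) (Or.inl one_ne_zero),
      digits_add b hb 0 _ (by omega) (Or.inr hpos), digits_geom_sum_sq hb (k + 1)]
    rfl

end Nat

theorem eight_mul_tri_add_one (n : ℕ) : 8 * tri n + 1 = (2 * n + 1) ^ 2 := by
  have h : tri n * 2 = n * (n + 1) := Nat.div_mul_cancel (Nat.even_mul_succ_self n).two_dvd
  nlinarith

theorem tri_half_pred_three_pow (k : ℕ) : tri ((3 ^ k - 1) / 2) = ∑ i ∈ range k, 9 ^ i := by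
  have hodd : 2 * ((3 ^ k - 1) / 2) + 1 = 3 ^ k := by
    have := Nat.two_mul_div_two_add_one_of_odd (Odd.pow (by decide : Odd 3) (n := k))
    omega
  have htri : 8 * tri ((3 ^ k - 1) / 2) + 1 = 9 ^ k := by
    rw [eight_mul_tri_add_one, hodd, ← pow_mul, mul_comm, pow_mul]; norm_num
  have hgeom : (∑ i ∈ range k, 9 ^ i) * 8 + 1 = 9 ^ k := geom_sum_mul_add 8 k
  omega

theorem triangular_repunit_base_nine_general (k : ℕ) :
    tri ((3 ^ k - 1) / 2) = (9 ^ k - 1) / 8 ∧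
    tri ((3 ^ k - 1) / 2) = ∑ i ∈ Finset.range k, 9 ^ i ∧
    (∀ d ∈ Nat.digits 9 (tri ((3 ^ k - 1) / 2)), d = 1) ∧
    (Nat.digits 3 (tri ((3 ^ k - 1) / 2))).reverse =
      Nat.digits 3 (tri ((3 ^ k - 1) / 2)) ∧
    (Nat.digits 9 (tri ((3 ^ k - 1) / 2))).reverse =
      Nat.digits 9 (tri ((3 ^ k - 1) / 2)) := by
  have h9 : Nat.digits 9 (∑ i ∈ range k, 9 ^ i) = replicate k 1 :=
    Nat.digits_geom_sum (by norm_num) k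
  have h3 : Nat.digits 3 (∑ i ∈ range k, 9 ^ i) = (replicate k 1).intersperse 0 :=
    Nat.digits_geom_sum_sq (b := 3) (by norm_num) k
  rw [tri_half_pred_three_pow, h9, h3]
  refine ⟨Nat.geomSum_eq (by norm_num) k, rfl, fun d hd => eq_of_mem_replicate hd, ?_,
    reverse_replicate⟩
  rw [reverse_intersperse, reverse_replicate]

theorem triangular_repunit_base_nine (k : ℕ) (hk : 1 ≤ k) :
    tri ((3 ^ k - 1) / 2) = (9 ^ k - 1) / 8 ∧
    tri ((3 ^ k - 1) / 2) = ∑ i ∈ Finset.range k, 9 ^ i ∧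
    (∀ d ∈ Nat.digits 9 (tri ((3 ^ k - 1) / 2)), d = 1) ∧
    (Nat.digits 3 (tri ((3 ^ k - 1) / 2))).reverse =
      Nat.digits 3 (tri ((3 ^ k - 1) / 2)) ∧
    (Nat.digits 9 (tri ((3 ^ k - 1) / 2))).reverse =
      Nat.digits 9 (tri ((3 ^ k - 1) / 2)) :=
  triangular_repunit_base_nine_general k
end
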